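/- Let W be a finite abelian ℓ-group that is a direct sum of r cyclic groups, and let m be the largest natural number such that the ℓ^m-torsion subgroup τ(W) = W[ℓ^m] is a free ℤ/ℓ^mℤ-module. Then the quotient W/τ(W) is a direct sum of at most r−1 cyclic groups (equivalently, W/τ(W) can be generated by at most r−1 elements). -/

import Mathlib

/-- The `m`-torsion subgroup `{w | m • w = 0}` of an abelian group. -/
def torsionSub (W : Type*) [AddCommGroup W] (m : ℕ) : AddSubgroup W where
  carrier := {x | m • x = 0}
  zero_mem' := by simp
  add_mem' := by
    intro a b ha hb
    simp only [Set.mem_setOf_eq] at *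
    rw [smul_add, ha, hb, add_zero]
  neg_mem' := by
    intro a ha
    simp only [Set.mem_setOf_eq] at *
    rw [smul_neg, ha, neg_zero]

/-- The `ℓ^m`-torsion subgroup of `W` is free as a `ℤ/ℓ^mℤ`-module (of some rank). -/
def IsFreeTor (ℓ : ℕ) (W : Type*) [AddCommGroup W] (m : ℕ) : Prop :=
  ∃ h : ℕ, Nonempty (torsionSub W (ℓ ^ m) ≃+ (Fin h → ZMod (ℓ ^ m)))

/-! If every exponent `e i` exceeded `m`, then `W[ℓ^(m+1)] ≅ (ℤ/ℓ^(m+1))^r` would be free,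
contradicting the maximality of `m`. Hence some cyclic factor has exponent `e i₀ ≤ m`, so its
generator lies in `τ(W)`, and the images of the other `r - 1` standard generators generate
`W/τ(W)`. -/

section

variable {W V : Type*} [AddCommGroup W] [AddCommGroup V]

lemma mem_torsionSub {k : ℕ} {x : W} : x ∈ torsionSub W k ↔ k • x = 0 := Iff.rfl

lemma AddEquiv.map_mem_torsionSub_iff (f : W ≃+ V) {k : ℕ} {x : W} :
    f x ∈ torsionSub V k ↔ x ∈ torsionSub W k := by
  simp only [mem_torsionSub, ← map_nsmul, map_eq_zero_iff f f.injective]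

def AddEquiv.torsionSubCongr (f : W ≃+ V) (k : ℕ) : torsionSub W k ≃+ torsionSub V k :=
  { f.toEquiv.subtypeEquiv fun _ => f.map_mem_torsionSub_iff.symm with
    map_add' := fun x y => Subtype.ext (map_add f (x : W) y) }

def torsionSubPi {ι : Type*} (M : ι → Type*) [∀ i, AddCommGroup (M i)] (k : ℕ) :
    torsionSub (∀ i, M i) k ≃+ ∀ i, torsionSub (M i) k where
  toFun x i := ⟨x.1 i, congrFun (mem_torsionSub.mp x.2) i⟩
  invFun y := ⟨fun i => (y i).1, funext fun i => mem_torsionSub.mp (y i).2⟩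
  left_inv _ := rfl
  right_inv _ := rfl
  map_add' _ _ := rfl

section ZMod

variable {n k : ℕ} [NeZero n]

lemma torsionSub_zmod_eq_zmultiples (hkn : k ∣ n) :
    torsionSub (ZMod n) k = AddSubgroup.zmultiples ((n / k : ℕ) : ZMod n) := by
  obtain ⟨d, rfl⟩ := hkn
  have hk : k ≠ 0 := left_ne_zero_of_mul (NeZero.ne (k * d))
  rw [Nat.mul_div_cancel_left d (Nat.pos_of_ne_zero hk)]
  ext x
  rw [mem_torsionSub, AddSubgroup.mem_zmultiples_iff]
  constructor
  · intro hx
    rw [← ZMod.natCast_zmod_val x, nsmul_eq_mul, ← Nat.cast_mul,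
      ZMod.natCast_eq_zero_iff] at hx
    obtain ⟨t, ht⟩ := Nat.dvd_of_mul_dvd_mul_left (Nat.pos_of_ne_zero hk) hx
    refine ⟨t, ?_⟩
    rw [← ZMod.natCast_zmod_val x, ht, natCast_zsmul, nsmul_eq_mul, Nat.cast_mul]
    exact mul_comm _ _
  · rintro ⟨t, rfl⟩
    rw [smul_comm, nsmul_eq_mul, ← Nat.cast_mul, ZMod.natCast_self, smul_zero]

lemma card_torsionSub_zmod (hkn : k ∣ n) : Nat.card (torsionSub (ZMod n) k) = k := by
  rw [torsionSub_zmod_eq_zmultiples hkn, Nat.card_zmultiples, ZMod.addOrderOf_coe _ (NeZero.ne n),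
    Nat.gcd_eq_right (Nat.div_dvd_of_dvd hkn), Nat.div_div_self hkn (NeZero.ne n)]

/-- `(ℤ/n)[k]` is a subgroup of a cyclic group, hence cyclic, and it has `k` elements. -/
noncomputable def torsionSubZModEquiv (hkn : k ∣ n) : torsionSub (ZMod n) k ≃+ ZMod k :=
  (zmodAddCyclicAddEquiv inferInstance).symm.trans
    (ZMod.ringEquivCongr (card_torsionSub_zmod hkn)).toAddEquiv

end ZMod

lemma isFreeTor_of_addEquiv_pi {ℓ r : ℕ} (hℓ : 0 < ℓ) {e : Fin r → ℕ}
    (g : W ≃+ ∀ i, ZMod (ℓ ^ e i)) {k : ℕ} (hk : ∀ i, k ≤ e i) : IsFreeTor ℓ W k :=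
  ⟨r, ⟨(g.torsionSubCongr _).trans <| (torsionSubPi _ _).trans <|
    AddEquiv.piCongrRight fun i =>
      haveI : NeZero (ℓ ^ e i) := ⟨(Nat.pow_pos hℓ).ne'⟩
      torsionSubZModEquiv (pow_dvd_pow ℓ (hk i))⟩⟩

lemma single_one_mem_torsionSub {ι : Type*} [DecidableEq ι] {n : ι → ℕ} {i : ι} {k : ℕ}
    (h : n i ∣ k) : (Pi.single i 1 : ∀ j, ZMod (n j)) ∈ torsionSub _ k := by
  rw [mem_torsionSub, ← Pi.single_smul, nsmul_one, (ZMod.natCast_eq_zero_iff _ _).mpr h,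
    Pi.single_zero]

lemma closure_range_single_one_zmod {ι : Type*} [Finite ι] [DecidableEq ι] (n : ι → ℕ) :
    AddSubgroup.closure (Set.range fun i => (Pi.single i 1 : ∀ j, ZMod (n j))) = ⊤ := by
  refine eq_top_iff.mpr fun x _ => AddSubgroup.pi_mem_of_single_mem x fun i => ?_
  rw [← ZMod.intCast_zmod_cast (x i), ← zsmul_one, Pi.single_smul]
  exact AddSubgroup.zsmul_mem _ (AddSubgroup.subset_closure (Set.mem_range_self i)) _

lemma AddSubgroup.closure_image_compl_eq_top {G Q ι : Type*} [AddGroup G] [AddGroup Q]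
    {v : ι → G} (hv : closure (Set.range v) = ⊤) {f : G →+ Q} (hf : Function.Surjective f)
    {i₀ : ι} (h₀ : f (v i₀) = 0) : closure ((f ∘ v) '' {i₀}ᶜ) = ⊤ := by
  have hrange : Set.range (f ∘ v) ⊆ insert 0 ((f ∘ v) '' {i₀}ᶜ) := by
    rintro _ ⟨i, rfl⟩
    by_cases hi : i = i₀
    · exact Or.inl (hi ▸ h₀)
    · exact Or.inr ⟨i, hi, rfl⟩
  rw [eq_top_iff, ← closure_insert_zero, ← map_top_of_surjective f hf, ← hv,
    AddMonoidHom.map_closure, ← Set.range_comp]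
  exact closure_mono hrange

end

theorem quotient_by_free_torsion_gens_general (ℓ : ℕ) (hℓ : ℓ.Prime) (r : ℕ)
    (W : Type*) [AddCommGroup W]
    (e : Fin r → ℕ)
    (hiso : Nonempty (W ≃+ ∀ i : Fin r, ZMod (ℓ ^ e i)))
    (m : ℕ)
    (hmax : ∀ m', IsFreeTor ℓ W m' → m' ≤ m) :
    ∃ S : Finset (W ⧸ torsionSub W (ℓ ^ m)),
      S.card ≤ r - 1 ∧ AddSubgroup.closure (S : Set (W ⧸ torsionSub W (ℓ ^ m))) = ⊤ := by
  classical
  obtain ⟨g⟩ := hiso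
  obtain ⟨i₀, hi₀⟩ : ∃ i₀, e i₀ ≤ m := by
    by_contra! h
    exact (hmax (m + 1) (isFreeTor_of_addEquiv_pi hℓ.pos g h)).not_gt (Nat.lt_succ_self m)
  set f := (QuotientAddGroup.mk' (torsionSub W (ℓ ^ m))).comp g.symm.toAddMonoidHom
  have hf : Function.Surjective f :=
    (QuotientAddGroup.mk'_surjective _).comp g.symm.surjective
  have hkill : f (Pi.single i₀ 1) = 0 :=
    (QuotientAddGroup.eq_zero_iff _).mpr <| g.symm.map_mem_torsionSub_iff.mpr <|
      single_one_mem_torsionSub (pow_dvd_pow ℓ hi₀)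
  refine ⟨(Finset.univ.erase i₀).image fun i => f (Pi.single i 1), ?_, ?_⟩
  · exact Finset.card_image_le.trans (by simp)
  · rw [Finset.coe_image, Finset.coe_erase, Finset.coe_univ, ← Set.compl_eq_univ_sdiff]
    exact AddSubgroup.closure_image_compl_eq_top (closure_range_single_one_zmod _) hf hkill

/-- Let `W` be a finite abelian `ℓ`-group that is a direct sum of `r` nontrivial cyclic
groups, and let `m` be the largest natural number such that `τ(W) = W[ℓ^m]` is a free
`ℤ/ℓ^mℤ`-module.  Then `W/τ(W)` can be generated by at most `r − 1` elements. -/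
theorem quotient_by_free_torsion_gens (ℓ : ℕ) (hℓ : ℓ.Prime) (r : ℕ)
    (W : Type*) [AddCommGroup W]
    (e : Fin r → ℕ) (he : ∀ i, 1 ≤ e i)
    (hiso : Nonempty (W ≃+ ∀ i : Fin r, ZMod (ℓ ^ e i)))
    (m : ℕ) (hfree : IsFreeTor ℓ W m)
    (hmax : ∀ m', IsFreeTor ℓ W m' → m' ≤ m) :
    ∃ S : Finset (W ⧸ torsionSub W (ℓ ^ m)),
      S.card ≤ r - 1 ∧ AddSubgroup.closure (S : Set (W ⧸ torsionSub W (ℓ ^ m))) = ⊤ :=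
  quotient_by_free_torsion_gens_general ℓ hℓ r W e hiso m hmax
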